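/- arXiv:1706.00164 — 5 statements merged into one kernel-verified Lean document; each statement's English description precedes it below -/
import Mathlib

section
/- Let L be a finite lattice satisfying the join-semidistributive law: for all a, b, c ∈ L, if a ⊔ b = a ⊔ c then a ⊔ (b ⊓ c) = a ⊔ b. Suppose e ⋖ g is a cover relation in L (e < g and no c satisfies e < c < g), and let j be the least element of the set {f ∈ L : e ⊔ f = g}. Then j is join-irreducible: j is not the bottom element of L, and whenever j = b ⊔ c one has j = b or j = c. -/
/-! Since `e ⋖ g`, each `e ⊔ x` with `x ≤ g` is `e` or `g`. If `j = b ⊔ c` and neither `e ⊔ b`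
nor `e ⊔ c` is `g`, then `b, c ≤ e`, so `g = e ⊔ j = e`; otherwise minimality of `j` makes it
equal to `b` or to `c`. -/

theorem CovBy.sup_eq_left_or_sup_eq {L : Type*} [Lattice L] {e g x : L} (hcov : e ⋖ g)
    (hx : x ≤ g) : e ⊔ x = e ∨ e ⊔ x = g :=
  hcov.eq_or_eq le_sup_left (sup_le hcov.le hx)

theorem min_join_complement_joinIrreducible_general {L : Type*} [Lattice L] [OrderBot L]
    (e g : L) (hcov : e ⋖ g) (j : L)
    (hj : e ⊔ j = g) (hmin : ∀ f : L, e ⊔ f = g → j ≤ f) :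
    j ≠ ⊥ ∧ ∀ b c : L, j = b ⊔ c → j = b ∨ j = c := by
  have hjg : j ≤ g := hj ▸ le_sup_right
  refine ⟨fun hbot => hcov.ne (by simpa [hbot] using hj), fun b c hbc => ?_⟩
  have hbj : b ≤ j := hbc ▸ le_sup_left
  have hcj : c ≤ j := hbc ▸ le_sup_right
  rcases hcov.sup_eq_left_or_sup_eq (hbj.trans hjg) with hb | hb
  · rcases hcov.sup_eq_left_or_sup_eq (hcj.trans hjg) with hc | hc
    · have hje : j ≤ e := hbc ▸ sup_le (sup_eq_left.mp hb) (sup_eq_left.mp hc)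
      exact absurd (hj.symm.trans (sup_eq_left.mpr hje)) hcov.ne'
    · exact Or.inr (le_antisymm (hmin c hc) hcj)
  · exact Or.inl (le_antisymm (hmin b hb) hbj)

/-- In a finite join-semidistributive lattice, if `e ⋖ g` is a cover relation and
`j` is the least element of `{f : e ⊔ f = g}`, then `j` is join-irreducible. -/
theorem min_join_complement_joinIrreducible {L : Type*} [Lattice L] [Fintype L] [OrderBot L]
    (hSD : ∀ a b c : L, a ⊔ b = a ⊔ c → a ⊔ (b ⊓ c) = a ⊔ b)
    (e g : L) (hcov : e ⋖ g) (j : L)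
    (hj : e ⊔ j = g) (hmin : ∀ f : L, e ⊔ f = g → j ≤ f) :
    j ≠ ⊥ ∧ ∀ b c : L, j = b ⊔ c → j = b ∨ j = c :=
  min_join_complement_joinIrreducible_general e g hcov j hj hmin
end

section
/- Let A be a ring and φ an additive real-valued function on finite-length A-modules as in the context. If M is a finite-length A-module and N is a submodule of M such that N is φ-semistable and M/N is φ-semistable, then M is φ-semistable. (The φ-semistable modules are closed under extensions.) -/
universe u

/-- Following King, a finite-length module `M` is `φ`-semistable if `φ M = 0` and
`φ N ≤ 0` for every submodule `N` of `M`. -/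
def Semistable {A : Type u} [Ring A] (φ : ModuleCat.{u} A → ℝ)
    (M : ModuleCat.{u} A) : Prop :=
  φ M = 0 ∧ ∀ N : Submodule A M, φ (ModuleCat.of A N) ≤ 0

/-- The `φ`-semistable modules are closed under extensions: if `N ≤ M` with `N` and
`M/N` both `φ`-semistable, then `M` is `φ`-semistable. -/
theorem semistable_of_extension {A : Type u} [Ring A] (φ : ModuleCat.{u} A → ℝ)
    (hadd : ∀ (M : ModuleCat.{u} A), IsFiniteLength A M → ∀ N : Submodule A M,
      φ M = φ (ModuleCat.of A N) + φ (ModuleCat.of A (M ⧸ N)))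
    (hiso : ∀ (M M' : ModuleCat.{u} A), (M ≃ₗ[A] M') → φ M = φ M')
    (M : ModuleCat.{u} A) (hM : IsFiniteLength A M)
    (N : Submodule A M)
    (hN : Semistable φ (ModuleCat.of A N))
    (hQ : Semistable φ (ModuleCat.of A (M ⧸ N))) :
    Semistable φ M := by
  obtain ⟨hN0, hNsub⟩ := hN
  obtain ⟨hQ0, hQsub⟩ := hQ
  constructor
  · rw [hadd M hM N, hN0, hQ0, add_zero]
  · intro P
    obtain ⟨hNoeth, hArt⟩ := isFiniteLength_iff_isNoetherian_isArtinian.mp hM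
    have hP : IsFiniteLength A P := by
      rw [isFiniteLength_iff_isNoetherian_isArtinian]
      exact ⟨inferInstance, inferInstance⟩
    set K : Submodule A P := Submodule.comap P.subtype N with hK
    have h1 := hadd (ModuleCat.of A P) hP K
    -- K ≅ submodule of N
    have e1 : (K : Type u) ≃ₗ[A] (Submodule.comap N.subtype P : Submodule A N) := by
      refine LinearEquiv.ofLinear
        (LinearMap.codRestrict _ (LinearMap.codRestrict _ (P.subtype.comp K.subtype)
          (fun x => x.2) ) (fun x => x.1.2))
        (LinearMap.codRestrict _ (LinearMap.codRestrict _ (N.subtype.comp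
          (Submodule.comap N.subtype P).subtype) (fun x => x.2)) (fun x => x.1.2))
        ?_ ?_ <;> ext x <;> rfl
    have h2 : φ (ModuleCat.of A K) ≤ 0 :=
      (hiso (ModuleCat.of A K) (ModuleCat.of A (Submodule.comap N.subtype P)) e1) ▸
        hNsub (Submodule.comap N.subtype P)
    -- P ⧸ K ≅ submodule of M ⧸ N
    let f : P →ₗ[A] (M ⧸ N) := N.mkQ.comp P.subtype
    have hker : LinearMap.ker f = K := by
      ext x
      simp [f, hK, Submodule.Quotient.mk_eq_zero]
    have e2 : ((P : Type u) ⧸ K) ≃ₗ[A] LinearMap.range f :=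
      hker ▸ f.quotKerEquivRange
    have h3 : φ (ModuleCat.of A ((P : Type u) ⧸ K)) ≤ 0 :=
      (hiso (ModuleCat.of A ((P : Type u) ⧸ K)) (ModuleCat.of A (LinearMap.range f)) e2) ▸
        hQsub (LinearMap.range f)
    have := hadd M hM P
    calc φ (ModuleCat.of A P) = φ (ModuleCat.of A K) + φ (ModuleCat.of A ((P : Type u) ⧸ K)) := h1
      _ ≤ 0 := by linarith
end

section
/- Let A be a ring and φ an additive real-valued function on finite-length A-modules as in the context. If f : M → M' is an A-module homomorphism between finite-length modules with both M and M' φ-semistable, then the kernel of f is φ-semistable. -/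
universe u

/-- If `f : M → M'` is a homomorphism between `φ`-semistable finite-length modules,
then the kernel of `f` is `φ`-semistable. -/
theorem semistable_kernel {A : Type u} [Ring A] (φ : ModuleCat.{u} A → ℝ)
    (hadd : ∀ (M : ModuleCat.{u} A), IsFiniteLength A M → ∀ N : Submodule A M,
      φ M = φ (ModuleCat.of A N) + φ (ModuleCat.of A (M ⧸ N)))
    (hiso : ∀ (M M' : ModuleCat.{u} A), (M ≃ₗ[A] M') → φ M = φ M')
    (M M' : ModuleCat.{u} A) (hM : IsFiniteLength A M) (hM' : IsFiniteLength A M')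
    (f : M →ₗ[A] M')
    (hMs : Semistable φ M) (hM's : Semistable φ M') :
    Semistable φ (ModuleCat.of A (LinearMap.ker f)) := by
  have hrange : φ (ModuleCat.of A (LinearMap.range f)) ≤ 0 := hM's.2 (LinearMap.range f)
  have hquot : φ (ModuleCat.of A (M ⧸ LinearMap.ker f)) =
      φ (ModuleCat.of A (LinearMap.range f)) :=
    hiso _ _ f.quotKerEquivRange
  have hsum := hadd M hM (LinearMap.ker f)
  have hker_le : φ (ModuleCat.of A (LinearMap.ker f)) ≤ 0 := hMs.2 (LinearMap.ker f)
  have hker_ge : 0 ≤ φ (ModuleCat.of A (LinearMap.ker f)) := by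
    have := hMs.1
    rw [this, hquot] at hsum
    linarith
  constructor
  · linarith
  · intro N
    have hiso' : φ (ModuleCat.of A N) =
        φ (ModuleCat.of A (N.map (LinearMap.ker f).subtype)) :=
      hiso _ _ (Submodule.equivMapOfInjective _ (Submodule.injective_subtype _) N)
    rw [hiso']
    exact hMs.2 _
end

section
/- Let A be a ring and φ an additive real-valued function on finite-length A-modules as in the context. If f : M → M' is an A-module homomorphism between finite-length modules with both M and M' φ-semistable, then the cokernel M'/im(f) is φ-semistable. (Hence the φ-semistable modules form an exact abelian subcategory of the category of finite-length A-modules.) -/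
universe u

/-- If `f : M → M'` is a homomorphism between `φ`-semistable finite-length modules,
then the cokernel `M'/im f` is `φ`-semistable. -/
theorem semistable_cokernel {A : Type u} [Ring A] (φ : ModuleCat.{u} A → ℝ)
    (hadd : ∀ (M : ModuleCat.{u} A), IsFiniteLength A M → ∀ N : Submodule A M,
      φ M = φ (ModuleCat.of A N) + φ (ModuleCat.of A (M ⧸ N)))
    (hiso : ∀ (M M' : ModuleCat.{u} A), (M ≃ₗ[A] M') → φ M = φ M')
    (M M' : ModuleCat.{u} A) (hM : IsFiniteLength A M) (hM' : IsFiniteLength A M')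
    (f : M →ₗ[A] M')
    (hMs : Semistable φ M) (hM's : Semistable φ M') :
    Semistable φ (ModuleCat.of A (M' ⧸ LinearMap.range f)) := by
  obtain ⟨hM0, hMsub⟩ := hMs
  obtain ⟨hM'0, hM'sub⟩ := hM's
  set I := LinearMap.range f with hIdef
  -- φ I = 0
  have hIle : φ (ModuleCat.of A I) ≤ 0 := hM'sub I
  have hIeq : φ (ModuleCat.of A I) = φ (ModuleCat.of A (M ⧸ LinearMap.ker f)) :=
    (hiso _ _ f.quotKerEquivRange).symm
  have h1 := hadd M hM (LinearMap.ker f)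
  have hker := hMsub (LinearMap.ker f)
  have hI0 : φ (ModuleCat.of A I) = 0 := by
    have : 0 ≤ φ (ModuleCat.of A I) := by rw [hIeq]; linarith
    linarith
  have h2 := hadd M' hM' I
  -- finite length instances
  have hNA := (isFiniteLength_iff_isNoetherian_isArtinian).1 hM'
  haveI := hNA.1; haveI := hNA.2
  constructor
  · linarith
  · intro N
    set P := N.comap I.mkQ with hPdef
    have hle : I ≤ P := by
      intro x hx
      have hz : I.mkQ x = 0 := (Submodule.Quotient.mk_eq_zero _).2 hx
      show I.mkQ x ∈ N
      rw [hz]; exact N.zero_mem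
    have hPfl : IsFiniteLength A P :=
      isFiniteLength_iff_isNoetherian_isArtinian.2 ⟨inferInstance, inferInstance⟩
    set g : P →ₗ[A] (M' ⧸ I) := I.mkQ.comp P.subtype with hgdef
    have hrange : LinearMap.range g = N := by
      rw [hgdef, LinearMap.range_comp, Submodule.range_subtype, hPdef,
        Submodule.map_comap_eq_of_surjective (Submodule.mkQ_surjective I)]
    have hkerg : LinearMap.ker g = I.comap P.subtype := by
      rw [hgdef, LinearMap.ker_comp, Submodule.ker_mkQ]
    have haddP : φ (ModuleCat.of A P) = φ (ModuleCat.of A (LinearMap.ker g)) +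
        φ (ModuleCat.of A ((↥P) ⧸ LinearMap.ker g)) :=
      hadd (ModuleCat.of A P) hPfl (LinearMap.ker g)
    have hkiso : φ (ModuleCat.of A (LinearMap.ker g)) = φ (ModuleCat.of A I) :=
      hiso _ _ ((LinearEquiv.ofEq _ _ hkerg).trans (Submodule.comapSubtypeEquivOfLe hle))
    have hqiso : φ (ModuleCat.of A ((↥P) ⧸ LinearMap.ker g)) = φ (ModuleCat.of A N) :=
      hiso _ _ (g.quotKerEquivRange.trans (LinearEquiv.ofEq _ _ hrange))
    have hPle : φ (ModuleCat.of A P) ≤ 0 := hM'sub P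
    linarith
end

section
/- Let A be a ring and let C and C' each be an isomorphism-closed class of finite-length A-modules containing the zero module that is (i) extension-closed (if N ≤ M with N in the class and M/N in the class, then M is in the class) and (ii) closed under kernels and images of homomorphisms between its members. If C and C' contain exactly the same bricks, then C = C'. (An exact abelian extension-closed subcategory of A-mod is determined by the bricks it contains.) -/
universe u

/-- A brick is a nonzero module all of whose nonzero endomorphisms are invertible
(equivalently, its endomorphism ring is a division ring). -/
def IsBrick {A : Type u} [Ring A] (M : ModuleCat.{u} A) : Prop :=
  Nontrivial M ∧ ∀ α : M →ₗ[A] M, α ≠ 0 → Function.Bijective α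

/-!
Induction on length. A module `M` of `C` that is neither zero nor a brick has a nonzero
endomorphism `f` that is not bijective, hence (`M` being noetherian) not surjective. Then
`ker f` and `range f` are proper submodules of `M`, so they are shorter than `M`; they lie in `C`,
hence in `C'` by induction, and `M` is an extension of `range f ≅ M ⧸ ker f` by `ker f`.
-/

section

variable {A : Type u} [Ring A]

theorem exists_ker_ne_top_range_ne_top_of_not_isBrick (M : ModuleCat.{u} A) [Nontrivial M]
    [IsNoetherian A M] (hM : ¬ IsBrick M) :
    ∃ f : M →ₗ[A] M, LinearMap.ker f ≠ ⊤ ∧ LinearMap.range f ≠ ⊤ := by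
  obtain ⟨f, hf0, hfbij⟩ : ∃ f : M →ₗ[A] M, f ≠ 0 ∧ ¬ Function.Bijective f := by
    simpa [IsBrick, ‹Nontrivial M›] using hM
  refine ⟨f, fun h => hf0 (LinearMap.ker_eq_top.mp h), fun h => hfbij ?_⟩
  exact IsNoetherian.bijective_of_surjective_endomorphism f (LinearMap.range_eq_top.mp h)

theorem imp_of_forall_isBrick_imp (C C' : ModuleCat.{u} A → Prop)
    (hfl : ∀ M : ModuleCat.{u} A, C M → IsFiniteLength A M)
    (hiso' : ∀ M M' : ModuleCat.{u} A, C' M → (M ≃ₗ[A] M') → C' M')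
    (hzero' : C' (ModuleCat.of A PUnit))
    (hext' : ∀ M : ModuleCat.{u} A, IsFiniteLength A M → ∀ N : Submodule A M,
      C' (ModuleCat.of A N) → C' (ModuleCat.of A (M ⧸ N)) → C' M)
    (hker : ∀ M M' : ModuleCat.{u} A, C M → C M' → ∀ f : M →ₗ[A] M',
      C (ModuleCat.of A (LinearMap.ker f)) ∧ C (ModuleCat.of A (LinearMap.range f)))
    (hbricks : ∀ M : ModuleCat.{u} A, IsBrick M → C M → C' M)
    (M : ModuleCat.{u} A) (hM : C M) : C' M := by
  induction M using (InvImage.wf (fun M : ModuleCat.{u} A => Module.length A M)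
    wellFounded_lt).induction with
  | h M IH =>
    obtain ⟨_, _⟩ := isFiniteLength_iff_isNoetherian_isArtinian.mp (hfl M hM)
    rcases subsingleton_or_nontrivial M with _ | _
    · exact hiso' _ _ hzero' (LinearEquiv.ofSubsingleton _ _)
    by_cases hbrick : IsBrick M
    · exact hbricks M hbrick hM
    obtain ⟨f, hker_ne_top, hrange_ne_top⟩ :=
      exists_ker_ne_top_range_ne_top_of_not_isBrick M hbrick
    obtain ⟨hCker, hCrange⟩ := hker M M hM hM f
    have hC'ker := IH (.of A _) (Submodule.length_lt hker_ne_top) hCker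
    have hC'range := IH (.of A _) (Submodule.length_lt hrange_ne_top) hCrange
    exact hext' M (hfl M hM) _ hC'ker (hiso' _ _ hC'range f.quotKerEquivRange.symm)

end

/-- An exact abelian extension-closed subcategory of finite-length modules is
determined by the bricks it contains: if `C` and `C'` are isomorphism-closed classes
of finite-length modules containing the zero module, closed under extensions, and
closed under kernels and images of homomorphisms between their members, and if they
contain exactly the same bricks, then `C = C'`. -/
theorem eq_of_same_bricks {A : Type u} [Ring A] (C C' : ModuleCat.{u} A → Prop)
    (hfl : ∀ M : ModuleCat.{u} A, C M → IsFiniteLength A M)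
    (hfl' : ∀ M : ModuleCat.{u} A, C' M → IsFiniteLength A M)
    (hiso : ∀ M M' : ModuleCat.{u} A, C M → (M ≃ₗ[A] M') → C M')
    (hiso' : ∀ M M' : ModuleCat.{u} A, C' M → (M ≃ₗ[A] M') → C' M')
    (hzero : C (ModuleCat.of A PUnit))
    (hzero' : C' (ModuleCat.of A PUnit))
    (hext : ∀ M : ModuleCat.{u} A, IsFiniteLength A M → ∀ N : Submodule A M,
      C (ModuleCat.of A N) → C (ModuleCat.of A (M ⧸ N)) → C M)
    (hext' : ∀ M : ModuleCat.{u} A, IsFiniteLength A M → ∀ N : Submodule A M,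
      C' (ModuleCat.of A N) → C' (ModuleCat.of A (M ⧸ N)) → C' M)
    (hker : ∀ M M' : ModuleCat.{u} A, C M → C M' → ∀ f : M →ₗ[A] M',
      C (ModuleCat.of A (LinearMap.ker f)) ∧ C (ModuleCat.of A (LinearMap.range f)))
    (hker' : ∀ M M' : ModuleCat.{u} A, C' M → C' M' → ∀ f : M →ₗ[A] M',
      C' (ModuleCat.of A (LinearMap.ker f)) ∧ C' (ModuleCat.of A (LinearMap.range f)))
    (hbricks : ∀ M : ModuleCat.{u} A, IsBrick M → (C M ↔ C' M)) :
    ∀ M : ModuleCat.{u} A, C M ↔ C' M := fun M =>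
  ⟨imp_of_forall_isBrick_imp C C' hfl hiso' hzero' hext' hker
      (fun N hN => (hbricks N hN).mp) M,
    imp_of_forall_isBrick_imp C' C hfl' hiso hzero hext hker'
      (fun N hN => (hbricks N hN).mpr) M⟩
end
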